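/- For Banach spaces X and a measurable space (Ω, Σ), the projective tensor product M(Ω, X) ⊗̂_π ℓ_∞^n is isomorphic to M(Ω, X ⊗̂_π ℓ_∞^n), via the map J(∑_{i=1}^n mᵢ ⊗ eᵢ) = ∑_{i=1}^n mᵢ(·) ⊗ eᵢ; moreover J is well defined with ‖J‖ ≤ 1, injective, and surjective. -/

import Mathlib

open MeasureTheory Filter Topology

/-- Partition sums for the variation of a vector measure, computed with respect to a given
norm-like function `N` on the target space. -/
def variationSetWith {Ω : Type*} [MeasurableSpace Ω] {M : Type*} [AddCommMonoid M]
    [TopologicalSpace M] (N : M → ℝ) (m : VectorMeasure Ω M) : Set ℝ :=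
  {r | ∃ (k : ℕ) (B : Fin k → Set Ω), (∀ i, MeasurableSet (B i)) ∧
    (Pairwise (Function.onFun Disjoint B)) ∧ r = ∑ i, N (m (B i))}

/-- Total variation (with respect to the function `N`) of a vector measure. -/
noncomputable def variationWith {Ω : Type*} [MeasurableSpace Ω] {M : Type*} [AddCommMonoid M]
    [TopologicalSpace M] (N : M → ℝ) (m : VectorMeasure Ω M) : ℝ :=
  sSup (variationSetWith N m)

/-- `M(Ω, X)`: the space of `X`-valued countably additive measures of bounded variation. -/
def MSpace (Ω : Type*) [MeasurableSpace Ω] (X : Type*) [NormedAddCommGroup X]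
    [NormedSpace ℝ X] : Submodule ℝ (VectorMeasure Ω X) where
  carrier := {m | BddAbove (variationSetWith (fun x => ‖x‖) m)}
  zero_mem' := by
    refine ⟨0, ?_⟩
    rintro r ⟨k, B, hmeas, hdisj, rfl⟩
    simp [VectorMeasure.zero_apply]
  add_mem' := by
    rintro f g ⟨Cf, hCf⟩ ⟨Cg, hCg⟩
    refine ⟨Cf + Cg, ?_⟩
    rintro r ⟨k, B, hmeas, hdisj, rfl⟩
    have h1 : ∑ i, ‖f (B i)‖ ≤ Cf := hCf ⟨k, B, hmeas, hdisj, rfl⟩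
    have h2 : ∑ i, ‖g (B i)‖ ≤ Cg := hCg ⟨k, B, hmeas, hdisj, rfl⟩
    calc ∑ i, ‖(f + g) (B i)‖ ≤ ∑ i, (‖f (B i)‖ + ‖g (B i)‖) := by
          refine Finset.sum_le_sum fun i _ => ?_
          rw [VectorMeasure.add_apply]; exact norm_add_le _ _
      _ = (∑ i, ‖f (B i)‖) + ∑ i, ‖g (B i)‖ := Finset.sum_add_distrib
      _ ≤ Cf + Cg := add_le_add h1 h2
  smul_mem' := by
    rintro c f ⟨Cf, hCf⟩
    refine ⟨‖c‖ * Cf, ?_⟩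
    rintro r ⟨k, B, hmeas, hdisj, rfl⟩
    have h1 : ∑ i, ‖f (B i)‖ ≤ Cf := hCf ⟨k, B, hmeas, hdisj, rfl⟩
    calc ∑ i, ‖(c • f) (B i)‖ = ∑ i, ‖c‖ * ‖f (B i)‖ := by
          refine Finset.sum_congr rfl fun i _ => ?_
          rw [VectorMeasure.smul_apply, norm_smul]
      _ = ‖c‖ * ∑ i, ‖f (B i)‖ := (Finset.mul_sum _ _ _).symm
      _ ≤ ‖c‖ * Cf := mul_le_mul_of_nonneg_left h1 (norm_nonneg c)

/-- The projective tensor norm on `M ⊗ ℓ_∞^n ≅ (Fin n → M)`, computed with respect to a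
norm-like function `nm` on `M`: the infimum of `∑ⱼ nm(zⱼ) ⬝ ‖cⱼ‖_∞` over all representations
`u = ∑ⱼ zⱼ ⊗ cⱼ` (i.e. `u i = ∑ⱼ cⱼ(i) • zⱼ`). -/
noncomputable def projNormPi {n : ℕ} {M : Type*} [AddCommGroup M] [Module ℝ M]
    (nm : M → ℝ) (u : Fin n → M) : ℝ :=
  sInf {r | ∃ (k : ℕ) (z : Fin k → M) (c : Fin k → (Fin n → ℝ)),
    (∀ i, u i = ∑ j, c j i • z j) ∧ r = ∑ j, nm (z j) * ‖c j‖}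

section AuxPi
open MeasureTheory
variable {Ω : Type*} [MeasurableSpace Ω] {n : ℕ} {X : Type*} [NormedAddCommGroup X]

/-- Combine a family of vector measures into a pi-valued vector measure. -/
def piVM (u : Fin n → VectorMeasure Ω X) : VectorMeasure Ω (Fin n → X) where
  measureOf' A := fun i => u i A
  empty' := funext fun i => (u i).empty
  not_measurable' A hA := funext fun i => (u i).not_measurable hA
  m_iUnion' f hf hd := Pi.hasSum.mpr fun i => (u i).m_iUnion hf hd

/-- Component of a pi-valued vector measure. -/
def compVM (m : VectorMeasure Ω (Fin n → X)) (i : Fin n) : VectorMeasure Ω X where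
  measureOf' A := m A i
  empty' := by show (m ∅) i = 0; rw [m.empty]; rfl
  not_measurable' A hA := by show (m A) i = 0; rw [m.not_measurable hA]; rfl
  m_iUnion' f hf hd := Pi.hasSum.mp (m.m_iUnion hf hd) i

/-- Evaluation at a set, as an additive monoid hom. -/
def evalVM (A : Set Ω) : VectorMeasure Ω X →+ X where
  toFun v := v A
  map_zero' := rfl
  map_add' v w := VectorMeasure.add_apply v w A

end AuxPi

/-- `M(Ω, X) ⊗̂_π ℓ_∞^n` (identified, since `ℓ_∞^n` is finite dimensional, with
`Fin n → M(Ω, X)` carrying the projective norm) is isomorphic to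
`M(Ω, X ⊗̂_π ℓ_∞^n)` (identified with `M(Ω, Fin n → X)` where the fibers carry the
projective norm), via `J(∑ mᵢ ⊗ eᵢ) = ∑ mᵢ(⬝) ⊗ eᵢ`; `J` is well defined with `‖J‖ ≤ 1`,
injective and surjective. -/

theorem mspace_projTensor_linftyN_iso
    (Ω : Type*) [MeasurableSpace Ω] (X : Type*) [NormedAddCommGroup X] [NormedSpace ℝ X]
    [CompleteSpace X] (n : ℕ) :
    ∃ J : (Fin n → ↥(MSpace Ω X)) ≃ₗ[ℝ] ↥(MSpace Ω (Fin n → X)),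
      (∀ (u : Fin n → ↥(MSpace Ω X)) (A : Set Ω) (i : Fin n),
        ((J u : VectorMeasure Ω (Fin n → X)) A) i = (u i : VectorMeasure Ω X) A) ∧
      (∀ u : Fin n → ↥(MSpace Ω X),
        variationWith (projNormPi (fun x : X => ‖x‖)) (J u : VectorMeasure Ω (Fin n → X)) ≤
        projNormPi
          (fun m : ↥(MSpace Ω X) => variationWith (fun x => ‖x‖) (m : VectorMeasure Ω X))
          u) := by
  
  classical
  -- membership lemmas
  have mem_pi : ∀ u : Fin n → ↥(MSpace Ω X),
      piVM (fun i => (u i : VectorMeasure Ω X)) ∈ MSpace Ω (Fin n → X) := by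
    intro u
    refine ⟨∑ i, variationWith (fun x : X => ‖x‖) (u i : VectorMeasure Ω X), ?_⟩
    rintro r ⟨k, B, hmeas, hdisj, rfl⟩
    have h1 : ∀ j, ‖piVM (fun i => (u i : VectorMeasure Ω X)) (B j)‖ ≤
        ∑ i, ‖(u i : VectorMeasure Ω X) (B j)‖ := by
      intro j
      refine pi_norm_le_iff_of_nonneg (Finset.sum_nonneg fun _ _ => norm_nonneg _) |>.mpr ?_
      intro i
      exact Finset.single_le_sum (f := fun i => ‖(u i : VectorMeasure Ω X) (B j)‖)
        (fun _ _ => norm_nonneg _) (Finset.mem_univ i)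
    calc ∑ j, ‖piVM (fun i => (u i : VectorMeasure Ω X)) (B j)‖
        ≤ ∑ j, ∑ i, ‖(u i : VectorMeasure Ω X) (B j)‖ :=
          Finset.sum_le_sum fun j _ => h1 j
      _ = ∑ i, ∑ j, ‖(u i : VectorMeasure Ω X) (B j)‖ := Finset.sum_comm
      _ ≤ ∑ i, variationWith (fun x : X => ‖x‖) (u i : VectorMeasure Ω X) := by
          refine Finset.sum_le_sum fun i _ => ?_
          exact le_csSup (u i).2 ⟨k, B, hmeas, hdisj, rfl⟩
  have mem_comp : ∀ (m : ↥(MSpace Ω (Fin n → X))) (i : Fin n),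
      compVM (m : VectorMeasure Ω (Fin n → X)) i ∈ MSpace Ω X := by
    intro m i
    obtain ⟨C, hC⟩ := m.2
    refine ⟨C, ?_⟩
    rintro r ⟨k, B, hmeas, hdisj, rfl⟩
    have : ∑ j, ‖compVM (m : VectorMeasure Ω (Fin n → X)) i (B j)‖ ≤
        ∑ j, ‖(m : VectorMeasure Ω (Fin n → X)) (B j)‖ := by
      refine Finset.sum_le_sum fun j _ => ?_
      exact norm_le_pi_norm _ i
    exact this.trans (hC ⟨k, B, hmeas, hdisj, rfl⟩)
  refine ⟨{ toFun := fun u => ⟨piVM (fun i => (u i : VectorMeasure Ω X)), mem_pi u⟩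
            invFun := fun m => fun i => ⟨compVM (m : VectorMeasure Ω (Fin n → X)) i, mem_comp m i⟩
            map_add' := by
              intro u v
              refine Subtype.ext (VectorMeasure.ext fun A hA => ?_)
              show (fun i => ((u i : VectorMeasure Ω X) + (v i : VectorMeasure Ω X)) A) = _
              funext i
              simp [VectorMeasure.add_apply, piVM]
            map_smul' := by
              intro c u
              refine Subtype.ext (VectorMeasure.ext fun A hA => ?_)
              show (fun i => (c • (u i : VectorMeasure Ω X)) A) = _
              funext i
              simp [VectorMeasure.smul_apply, piVM]
            left_inv := by
              intro u
              funext i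
              refine Subtype.ext (VectorMeasure.ext fun A hA => ?_)
              rfl
            right_inv := by
              intro m
              refine Subtype.ext (VectorMeasure.ext fun A hA => ?_)
              rfl }, ?_, ?_⟩
  · intro u A i; rfl
  · intro u
    -- sSup of partition sums ≤ sInf over representations
    have hrepne : {r | ∃ (k : ℕ) (z : Fin k → ↥(MSpace Ω X)) (c : Fin k → (Fin n → ℝ)),
        (∀ i, u i = ∑ j, c j i • z j) ∧
        r = ∑ j, variationWith (fun x : X => ‖x‖) (z j : VectorMeasure Ω X) * ‖c j‖}.Nonempty := by
      refine ⟨_, n, u, fun j i => if i = j then (1:ℝ) else 0, fun i => ?_, rfl⟩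
      simp [ite_smul]
    refine le_csInf hrepne ?_
    rintro r ⟨k, z, c, hrep, rfl⟩
    refine csSup_le ⟨0, 0, Fin.elim0, fun i => i.elim0, fun i => i.elim0, by simp⟩ ?_
    rintro s ⟨p, B, hmeas, hdisj, rfl⟩
    -- termwise bound via csInf_le
    have key : ∀ q : Fin p,
        projNormPi (fun x : X => ‖x‖)
          ((piVM (fun i => (u i : VectorMeasure Ω X))) (B q)) ≤
        ∑ j, ‖(z j : VectorMeasure Ω X) (B q)‖ * ‖c j‖ := by
      intro q
      refine csInf_le ⟨0, ?_⟩ ?_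
      · rintro t ⟨k', z', c', _, rfl⟩
        exact Finset.sum_nonneg fun j _ => mul_nonneg (norm_nonneg _) (norm_nonneg _)
      · refine ⟨k, fun j => (z j : VectorMeasure Ω X) (B q), c, fun i => ?_, rfl⟩
        have := congrArg (fun m : ↥(MSpace Ω X) => (m : VectorMeasure Ω X) (B q)) (hrep i)
        rw [show ((piVM (fun i => (u i : VectorMeasure Ω X))) (B q)) i
            = (u i : VectorMeasure Ω X) (B q) from rfl, this]
        rw [show ((((∑ j, c j i • z j : ↥(MSpace Ω X)) : VectorMeasure Ω X)) (B q))
            = evalVM (X := X) (B q) ((∑ j, c j i • z j : ↥(MSpace Ω X)) : VectorMeasure Ω X)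
            from rfl]
        push_cast
        rw [map_sum]
        refine Finset.sum_congr rfl fun j _ => ?_
        show (c j i • (z j : VectorMeasure Ω X)) (B q) = c j i • (z j : VectorMeasure Ω X) (B q)
        exact VectorMeasure.smul_apply _ _ _
    calc ∑ q, projNormPi (fun x : X => ‖x‖)
            ((piVM (fun i => (u i : VectorMeasure Ω X))) (B q))
        ≤ ∑ q, ∑ j, ‖(z j : VectorMeasure Ω X) (B q)‖ * ‖c j‖ :=
          Finset.sum_le_sum fun q _ => key q
      _ = ∑ j, (∑ q, ‖(z j : VectorMeasure Ω X) (B q)‖) * ‖c j‖ := by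
          rw [Finset.sum_comm]
          exact Finset.sum_congr rfl fun j _ => (Finset.sum_mul _ _ _).symm
      _ ≤ ∑ j, variationWith (fun x : X => ‖x‖) (z j : VectorMeasure Ω X) * ‖c j‖ := by
          refine Finset.sum_le_sum fun j _ => ?_
          exact mul_le_mul_of_nonneg_right
            (le_csSup (z j).2 ⟨p, B, hmeas, hdisj, rfl⟩) (norm_nonneg _)
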